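/- arXiv:1508.02977 — 2 statements merged into one kernel-verified Lean document; each statement's English description precedes it below -/
import Mathlib

section
/- Let H be a real Hilbert space with two bounded coercive symmetric bilinear forms a and b satisfying b(v,v) ≤ a(v,v) for all v. Let u_a and u_b solve a(u_a, v) = F(v) and b(u_b, v) = F(v) for all v ∈ H, for a fixed continuous linear functional F. Then a(u_a - u_b, u_a - u_b) ≤ (a - b)(u_b, u_b) + 2|(a−b)(u_b, u_a − u_b)|, and in particular if a − b is positive semidefinite then the energy error a(u_a − u_b, u_a − u_b)^{1/2} is bounded by a constant times ((a−b)(u_b,u_b))^{1/2}. -/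
/-!
Writing `e = u_a - u_b` and `d = a - b`, the two variational equations give the error identity
`a(e, ·) = -d(u_b, ·)`. Testing it with `e` bounds the energy error by `|d(u_b, e)|`. When `d` is
positive semidefinite, Cauchy–Schwarz for `d` and `d(e, e) ≤ a(e, e)` turn
`a(e, e)² = d(u_b, e)²` into `a(e, e) ≤ d(u_b, u_b)`, so the constant is `K = 1`.
-/

namespace LinearMap

variable {R M : Type*} [CommRing R] [AddCommGroup M] [Module R M]
  {a b : M →ₗ[R] M →ₗ[R] R} {x y : M}

theorem apply_sub_eq_sub_apply_of_apply_eq (h : ∀ v, a x v = b y v) (w : M) :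
    a (x - y) w = b y w - a y w := by
  rw [map_sub, sub_apply, h]

theorem apply_sub_sub_le_abs_of_apply_eq [LinearOrder R] [IsOrderedRing R]
    (h : ∀ v, a x v = b y v) :
    a (x - y) (x - y) ≤ |a y (x - y) - b y (x - y)| := by
  rw [apply_sub_eq_sub_apply_of_apply_eq h, ← neg_sub]
  exact neg_le_abs _

theorem apply_sub_sub_le_of_apply_eq [LinearOrder R] [IsStrictOrderedRing R]
    (h : ∀ v, a x v = b y v) (hpos : ∀ v, 0 ≤ a v v - b v v)
    (ha : ∀ u v, a u v = a v u) (hb : ∀ u v, b u v = b v u)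
    (hb_nonneg : 0 ≤ b (x - y) (x - y)) :
    a (x - y) (x - y) ≤ a y y - b y y := by
  set e := x - y
  set d := a - b
  have hd_apply (u v : M) : d u v = a u v - b u v := rfl
  have hd_symm : d e y = d y e := by rw [hd_apply, hd_apply, ha, hb]
  have h_err : a e e = -d y e := by
    rw [apply_sub_eq_sub_apply_of_apply_eq h, hd_apply, neg_sub]
  have h_de : d e e ≤ a e e := by rw [hd_apply]; linarith
  have h_dyy : 0 ≤ d y y := hpos y
  have h_cs : d y e * d e y ≤ d y y * d e e :=
    BilinForm.apply_mul_apply_le_of_forall_zero_le d hpos y e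
  have h_sq : a e e * a e e ≤ d y y * a e e := by
    rw [hd_symm] at h_cs
    rw [h_err, neg_mul_neg]
    nlinarith
  rcases le_or_gt (a e e) 0 with h_nonpos | h_pos
  · exact h_nonpos.trans h_dyy
  · exact le_of_mul_le_mul_right h_sq h_pos

end LinearMap

theorem model_perturbation_estimate_general
    {H : Type*} [NormedAddCommGroup H] [InnerProductSpace ℝ H]
    (a b : H →ₗ[ℝ] H →ₗ[ℝ] ℝ)
    (hasymm : ∀ u v, a u v = a v u) (hbsymm : ∀ u v, b u v = b v u)
    (cb : ℝ) (hcb : 0 < cb)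
    (hbcoer : ∀ v, cb * ‖v‖ ^ 2 ≤ b v v)
    (hba : ∀ v, b v v ≤ a v v)
    (F : H →L[ℝ] ℝ) (ua ub : H)
    (hua : ∀ v, a ua v = F v) (hub : ∀ v, b ub v = F v) :
    a (ua - ub) (ua - ub) ≤
      (a ub ub - b ub ub) + 2 * |a ub (ua - ub) - b ub (ua - ub)| ∧
    ((∀ v, 0 ≤ a v v - b v v) →
      ∃ K : ℝ, 0 < K ∧
        Real.sqrt (a (ua - ub) (ua - ub)) ≤ K * Real.sqrt (a ub ub - b ub ub)) := by
  have h_sol (v : H) : a ua v = b ub v := (hua v).trans (hub v).symm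
  refine ⟨?_, fun hpos => ⟨1, one_pos, ?_⟩⟩
  · have h_err := LinearMap.apply_sub_sub_le_abs_of_apply_eq h_sol
    have h_abs := abs_nonneg (a ub (ua - ub) - b ub (ua - ub))
    linarith [hba ub]
  · have hb_nonneg : 0 ≤ b (ua - ub) (ua - ub) :=
      le_trans (by positivity) (hbcoer (ua - ub))
    rw [one_mul]
    exact Real.sqrt_le_sqrt
      (LinearMap.apply_sub_sub_le_of_apply_eq h_sol hpos hasymm hbsymm hb_nonneg)

/-- Model-perturbation estimate for variational solutions of two nested symmetric
bounded coercive bilinear forms. -/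
theorem model_perturbation_estimate
    {H : Type*} [NormedAddCommGroup H] [InnerProductSpace ℝ H] [CompleteSpace H]
    (a b : H →ₗ[ℝ] H →ₗ[ℝ] ℝ)
    (hasymm : ∀ u v, a u v = a v u) (hbsymm : ∀ u v, b u v = b v u)
    (Ca Cb : ℝ) (habdd : ∀ u v, |a u v| ≤ Ca * ‖u‖ * ‖v‖)
    (hbbdd : ∀ u v, |b u v| ≤ Cb * ‖u‖ * ‖v‖)
    (ca cb : ℝ) (hca : 0 < ca) (hcb : 0 < cb)
    (hacoer : ∀ v, ca * ‖v‖ ^ 2 ≤ a v v) (hbcoer : ∀ v, cb * ‖v‖ ^ 2 ≤ b v v)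
    (hba : ∀ v, b v v ≤ a v v)
    (F : H →L[ℝ] ℝ) (ua ub : H)
    (hua : ∀ v, a ua v = F v) (hub : ∀ v, b ub v = F v) :
    a (ua - ub) (ua - ub) ≤
      (a ub ub - b ub ub) + 2 * |a ub (ua - ub) - b ub (ua - ub)| ∧
    ((∀ v, 0 ≤ a v v - b v v) →
      ∃ K : ℝ, 0 < K ∧
        Real.sqrt (a (ua - ub) (ua - ub)) ≤ K * Real.sqrt (a ub ub - b ub ub)) :=
  model_perturbation_estimate_general a b hasymm hbsymm cb hcb hbcoer hba F ua ub hua hub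
end

section
/- Let Ω = Ω₁ ∪ Ω₂ be an overlapping decomposition of a domain with Ω₁ ∩ Ω₂ nonempty and open. In the abstract Schwarz framework: let H be a Hilbert space, a a symmetric bounded coercive bilinear form, and P₁, P₂ the a-orthogonal projections onto closed subspaces H₁, H₂ with H = H₁ + H₂. Then the error propagation operator E = (I − P₂)(I − P₁) of the multiplicative Schwarz method satisfies ‖E‖_a < 1, where ‖·‖_a is the energy norm; consequently the Schwarz iteration converges geometrically to the exact solution. -/
/-!
Write `w = (I - P₁) u`. Since `w` is `a`-orthogonal to `H₁`, splitting `w = v₁ + v₂` along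
`H = H₁ + H₂` gives `a(w, w) = a(w, v₂) = a(P₂ w, v₂)`, and Cauchy–Schwarz yields
`a(w, w) ≤ D · a(P₂ w, P₂ w)` as soon as the splitting is stable, `a(v₂, v₂) ≤ D · a(w, w)`.
Stability comes from the open mapping theorem applied to `H₁ × H₂ → H`, together with the
equivalence of the energy norm and the norm of `H`. Two Pythagoras identities then give
`a(E u, E u) = a(w, w) - a(P₂ w, P₂ w) ≤ (1 - 1/D) a(w, w) ≤ (1 - 1/D) a(u, u)`.
-/

section EnergyForm

variable {V : Type*} [AddCommGroup V] [Module ℝ V]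

theorem apply_sub_self_eq_sub_of_apply_sub_eq_zero (a : V →ₗ[ℝ] V →ₗ[ℝ] ℝ)
    (hsymm : ∀ u v, a u v = a v u) {u p : V} (h : a (u - p) p = 0) :
    a (u - p) (u - p) = a u u - a p p := by
  simp only [map_sub, LinearMap.sub_apply] at h ⊢
  rw [hsymm p u]
  linarith

theorem apply_self_le_mul_apply_proj (a : V →ₗ[ℝ] V →ₗ[ℝ] ℝ)
    (hsymm : ∀ u v, a u v = a v u) (hpos : ∀ u, 0 ≤ a u u) {K₁ K₂ : Submodule ℝ V}
    {w p v₁ v₂ : V} {D : ℝ} (hD : 0 ≤ D) (hw : ∀ v ∈ K₁, a w v = 0)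
    (hp : ∀ v ∈ K₂, a (w - p) v = 0) (hv₁ : v₁ ∈ K₁) (hv₂ : v₂ ∈ K₂) (hsplit : v₁ + v₂ = w)
    (hstab : a v₂ v₂ ≤ D * a w w) :
    a w w ≤ D * a p p := by
  have hww : a w w = a p v₂ := by
    have hpv₂ := hp v₂ hv₂
    simp only [map_sub, LinearMap.sub_apply] at hpv₂
    calc a w w = a w v₁ + a w v₂ := by rw [← map_add, hsplit]
      _ = a p v₂ := by rw [hw v₁ hv₁]; linarith
  have hCS : a p v₂ ^ 2 ≤ a p p * a v₂ v₂ :=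
    LinearMap.BilinForm.apply_sq_le_of_symm a hpos
      (LinearMap.isSymm_def.2 fun x y => hsymm x y) p v₂
  have hsq : a w w ^ 2 ≤ (D * a p p) * a w w := by
    calc a w w ^ 2 = a p v₂ ^ 2 := by rw [hww]
      _ ≤ a p p * a v₂ v₂ := hCS
      _ ≤ a p p * (D * a w w) := mul_le_mul_of_nonneg_left hstab (hpos p)
      _ = (D * a p p) * a w w := by ring
  rcases (hpos w).eq_or_lt with hzero | hwpos
  · rw [← hzero]
    exact mul_nonneg hD (hpos p)
  · nlinarith

theorem apply_sub_proj_sub_proj_le (a : V →ₗ[ℝ] V →ₗ[ℝ] ℝ)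
    (hsymm : ∀ u v, a u v = a v u) (hpos : ∀ u, 0 ≤ a u u) {K₁ K₂ : Submodule ℝ V}
    {P₁ P₂ : V → V}
    (hP₁mem : ∀ u, P₁ u ∈ K₁) (hP₁orth : ∀ u, ∀ v ∈ K₁, a (u - P₁ u) v = 0)
    (hP₂mem : ∀ u, P₂ u ∈ K₂) (hP₂orth : ∀ u, ∀ v ∈ K₂, a (u - P₂ u) v = 0)
    {D : ℝ} (hD : 1 ≤ D)
    (hstab : ∀ w, ∃ v₁ ∈ K₁, ∃ v₂ ∈ K₂, v₁ + v₂ = w ∧ a v₂ v₂ ≤ D * a w w) (u : V) :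
    a ((u - P₁ u) - P₂ (u - P₁ u)) ((u - P₁ u) - P₂ (u - P₁ u)) ≤ (1 - D⁻¹) * a u u := by
  set w := u - P₁ u
  have hpyth₁ : a w w = a u u - a (P₁ u) (P₁ u) :=
    apply_sub_self_eq_sub_of_apply_sub_eq_zero a hsymm (hP₁orth u _ (hP₁mem u))
  have hpyth₂ : a (w - P₂ w) (w - P₂ w) = a w w - a (P₂ w) (P₂ w) :=
    apply_sub_self_eq_sub_of_apply_sub_eq_zero a hsymm (hP₂orth w _ (hP₂mem w))
  obtain ⟨v₁, hv₁, v₂, hv₂, hsplit, hv₂le⟩ := hstab w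
  have hkey : a w w ≤ D * a (P₂ w) (P₂ w) :=
    apply_self_le_mul_apply_proj a hsymm hpos (by linarith) (hP₁orth u) (hP₂orth w)
      hv₁ hv₂ hsplit hv₂le
  have hDpos : 0 < D := by linarith
  have hinv : D⁻¹ * a w w ≤ a (P₂ w) (P₂ w) := by
    rw [inv_mul_le_iff₀ hDpos]
    exact hkey
  have hcoef : 0 ≤ 1 - D⁻¹ := sub_nonneg.2 (inv_le_one_of_one_le₀ hD)
  calc a (w - P₂ w) (w - P₂ w) ≤ (1 - D⁻¹) * a w w := by rw [hpyth₂]; linarith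
    _ ≤ (1 - D⁻¹) * a u u := by
      gcongr
      linarith [hpos (P₁ u)]

end EnergyForm

theorem Submodule.exists_decomposition_norm_le_of_sup_eq_top {𝕜 E : Type*}
    [NontriviallyNormedField 𝕜] [NormedAddCommGroup E] [NormedSpace 𝕜 E] [CompleteSpace E]
    {K₁ K₂ : Submodule 𝕜 E} (hK₁ : IsClosed (K₁ : Set E)) (hK₂ : IsClosed (K₂ : Set E))
    (hsum : K₁ ⊔ K₂ = ⊤) :
    ∃ M > 0, ∀ w, ∃ v₁ ∈ K₁, ∃ v₂ ∈ K₂, v₁ + v₂ = w ∧ ‖v₁‖ ≤ M * ‖w‖ ∧ ‖v₂‖ ≤ M * ‖w‖ := by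
  have : CompleteSpace K₁ := hK₁.completeSpace_coe
  have : CompleteSpace K₂ := hK₂.completeSpace_coe
  let f : K₁ × K₂ →L[𝕜] E := K₁.subtypeL.coprod K₂.subtypeL
  have hsurj : Function.Surjective f := by
    intro w
    obtain ⟨v₁, hv₁, v₂, hv₂, rfl⟩ := Submodule.mem_sup.1 (hsum ▸ Submodule.mem_top : w ∈ K₁ ⊔ K₂)
    exact ⟨(⟨v₁, hv₁⟩, ⟨v₂, hv₂⟩), rfl⟩
  obtain ⟨M, hM, hpre⟩ := f.exists_preimage_norm_le hsurj
  refine ⟨M, hM, fun w => ?_⟩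
  obtain ⟨v, rfl, hv⟩ := hpre w
  exact ⟨v.1, v.1.2, v.2, v.2.2, rfl, (norm_fst_le v).trans hv, (norm_snd_le v).trans hv⟩

theorem exists_energy_stable_decomposition {E : Type*} [NormedAddCommGroup E]
    [NormedSpace ℝ E] [CompleteSpace E] (a : E →ₗ[ℝ] E →ₗ[ℝ] ℝ) {C c : ℝ} (hc : 0 < c)
    (hbdd : ∀ u v, |a u v| ≤ C * ‖u‖ * ‖v‖) (hcoer : ∀ u, c * ‖u‖ ^ 2 ≤ a u u)
    {K₁ K₂ : Submodule ℝ E} (hK₁ : IsClosed (K₁ : Set E)) (hK₂ : IsClosed (K₂ : Set E))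
    (hsum : K₁ ⊔ K₂ = ⊤) :
    ∃ D ≥ 1, ∀ w, ∃ v₁ ∈ K₁, ∃ v₂ ∈ K₂, v₁ + v₂ = w ∧ a v₂ v₂ ≤ D * a w w := by
  obtain ⟨M, -, hdec⟩ := Submodule.exists_decomposition_norm_le_of_sup_eq_top hK₁ hK₂ hsum
  -- `max C 0` because `C` itself may be negative when `E` is trivial.
  set C' := max C 0
  refine ⟨max 1 (C' * M ^ 2 / c), le_max_left _ _, fun w => ?_⟩
  obtain ⟨v₁, hv₁, v₂, hv₂, hsplit, -, hv₂le⟩ := hdec w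
  have hC' : 0 ≤ C' := le_max_right _ _
  have hpos : 0 ≤ a w w := (by positivity : 0 ≤ c * ‖w‖ ^ 2).trans (hcoer w)
  refine ⟨v₁, hv₁, v₂, hv₂, hsplit, ?_⟩
  calc a v₂ v₂ ≤ C * ‖v₂‖ * ‖v₂‖ := (le_abs_self _).trans (hbdd v₂ v₂)
    _ ≤ C' * (M * ‖w‖) ^ 2 := by
      rw [mul_assoc, ← sq]
      gcongr
      exact le_max_left _ _
    _ = C' * M ^ 2 / c * (c * ‖w‖ ^ 2) := by field_simp
    _ ≤ C' * M ^ 2 / c * a w w := by gcongr; exact hcoer w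
    _ ≤ max 1 (C' * M ^ 2 / c) * a w w := by gcongr; exact le_max_right _ _

theorem iterate_le_pow_mul {X : Type*} {f : X → X} {N : X → ℝ} {ρ : ℝ} (hρ : 0 ≤ ρ)
    (hf : ∀ x, N (f x) ≤ ρ * N x) (x : X) (k : ℕ) : N (f^[k] x) ≤ ρ ^ k * N x := by
  induction k with
  | zero => simp
  | succ k ih =>
    rw [Function.iterate_succ_apply', pow_succ', mul_assoc]
    exact (hf _).trans (mul_le_mul_of_nonneg_left ih hρ)

/-- Abstract convergence of the multiplicative overlapping Schwarz method: if
`H = H₁ + H₂` with `P₁, P₂` the `a`-orthogonal projections onto the closed subspaces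
`H₁, H₂`, then the error propagation operator `E = (I − P₂)(I − P₁)` is a strict
contraction in the energy norm, so the Schwarz iteration converges geometrically. -/
theorem schwarz_error_propagation_contraction
    {H : Type*} [NormedAddCommGroup H] [InnerProductSpace ℝ H] [CompleteSpace H]
    (a : H →ₗ[ℝ] H →ₗ[ℝ] ℝ)
    (hsymm : ∀ u v, a u v = a v u)
    (C c : ℝ) (hc : 0 < c)
    (hbdd : ∀ u v, |a u v| ≤ C * ‖u‖ * ‖v‖)
    (hcoer : ∀ u, c * ‖u‖ ^ 2 ≤ a u u)
    (H₁ H₂ : Submodule ℝ H) (hH₁ : IsClosed (H₁ : Set H)) (hH₂ : IsClosed (H₂ : Set H))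
    (hsum : H₁ ⊔ H₂ = ⊤)
    (P₁ P₂ : H →ₗ[ℝ] H)
    (hP₁mem : ∀ u, P₁ u ∈ H₁) (hP₁orth : ∀ u, ∀ v ∈ H₁, a (u - P₁ u) v = 0)
    (hP₂mem : ∀ u, P₂ u ∈ H₂) (hP₂orth : ∀ u, ∀ v ∈ H₂, a (u - P₂ u) v = 0)
    (E : H → H) (hE : ∀ u, E u = (u - P₁ u) - P₂ (u - P₁ u)) :
    ∃ ρ : ℝ, 0 ≤ ρ ∧ ρ < 1 ∧
      (∀ u, Real.sqrt (a (E u) (E u)) ≤ ρ * Real.sqrt (a u u)) ∧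
      (∀ u (k : ℕ), Real.sqrt (a (E^[k] u) (E^[k] u)) ≤ ρ ^ k * Real.sqrt (a u u)) := by
  have hpos : ∀ u, 0 ≤ a u u := fun u => (by positivity : 0 ≤ c * ‖u‖ ^ 2).trans (hcoer u)
  obtain ⟨D, hD, hstab⟩ := exists_energy_stable_decomposition a hc hbdd hcoer hH₁ hH₂ hsum
  have hcoef : 0 ≤ 1 - D⁻¹ := sub_nonneg.2 (inv_le_one_of_one_le₀ hD)
  have hcontr (u : H) : √(a (E u) (E u)) ≤ √(1 - D⁻¹) * √(a u u) := by
    rw [hE, ← Real.sqrt_mul hcoef]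
    exact Real.sqrt_le_sqrt (apply_sub_proj_sub_proj_le a hsymm hpos hP₁mem hP₁orth hP₂mem
      hP₂orth hD hstab u)
  have hlt : 1 - D⁻¹ < 1 := sub_lt_self _ (inv_pos.2 (by linarith))
  refine ⟨√(1 - D⁻¹), Real.sqrt_nonneg _, ?_, hcontr,
    iterate_le_pow_mul (N := fun u => √(a u u)) (Real.sqrt_nonneg _) hcontr⟩
  exact (Real.sqrt_lt_sqrt hcoef hlt).trans_eq Real.sqrt_one
end
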